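/- Every topology comes from a 0-1-valued generalized quasi-metric: if (X,τ) is a topological space, then the function d : X × X → {0,1}^τ defined by d(x,y)(U) = 0 if (x ∈ U ⟹ y ∈ U) and d(x,y)(U) = 1 otherwise, is a 0-1-valued generalized quasi-metric with index set I = τ, and τ = To(X,d,τ). -/
import Mathlib


open Filter Topology

variable {X I : Type*}

/-- `d` is a 0-1-valued generalized quasi-metric: each coordinate takes values in {0,1},
vanishes on the diagonal, and satisfies the triangle inequality. -/
def IsGQM (d : X → X → I → ℝ) : Prop :=
  (∀ x y i, d x y i = 0 ∨ d x y i = 1) ∧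
  (∀ x i, d x x i = 0) ∧
  (∀ x y z i, d x z i ≤ d x y i + d y z i)

/-- `U` is open w.r.t. `d`: every point of `U` has a finite intersection of
basic sets contained in `U`. -/
def IsOpenGQM (d : X → X → I → ℝ) (U : Set X) : Prop :=
  ∀ x ∈ U, ∃ J : Finset I, {y | ∀ i ∈ J, d x y i = 0} ⊆ U

/-- The topology `To(X,d,I)`. -/
def To (d : X → X → I → ℝ) : TopologicalSpace X where
  IsOpen := IsOpenGQM d
  isOpen_univ := fun _ _ => ⟨∅, fun _ _ => trivial⟩
  isOpen_inter := by
    classical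
    intro U V hU hV x hx
    obtain ⟨J1, h1⟩ := hU x hx.1
    obtain ⟨J2, h2⟩ := hV x hx.2
    refine ⟨J1 ∪ J2, fun y hy => ⟨h1 ?_, h2 ?_⟩⟩
    · exact fun i hi => hy i (Finset.mem_union_left _ hi)
    · exact fun i hi => hy i (Finset.mem_union_right _ hi)
  isOpen_sUnion := by
    intro S hS x hx
    obtain ⟨U, hU, hxU⟩ := hx
    obtain ⟨J, hJ⟩ := hS U hU x hxU
    exact ⟨J, fun y hy => ⟨U, hU, hJ hy⟩⟩
open Classical in
/-- Quasi-metric measuring failure of `x ∈ U → y ∈ U`. -/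
noncomputable def dU (U : Set X) (x y : X) : ℝ := if x ∈ U → y ∈ U then 0 else 1
/-- The canonical 0-1-valued generalized quasi-metric of a topological space,
indexed by the open sets. -/
noncomputable def canonD [TopologicalSpace X] (x y : X) (U : {U : Set X // IsOpen U}) : ℝ :=
  dU U.1 x y

theorem stmt6 [t : TopologicalSpace X] :
    IsGQM (canonD (X := X)) ∧ To (canonD (X := X)) = t := by
  classical
  constructor
  · refine ⟨fun x y i => ?_, fun x i => ?_, fun x y z i => ?_⟩
    · unfold canonD dU; split <;> simp
    · unfold canonD dU; simp
    · unfold canonD dU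
      by_cases hxz : x ∈ i.1 → z ∈ i.1
      · simp only [if_pos hxz]
        split <;> split <;> norm_num
      · push_neg at hxz
        by_cases hy : y ∈ i.1
        · rw [if_neg (by tauto), show (if y ∈ i.1 → z ∈ i.1 then (0:ℝ) else 1) = 1 from if_neg (by tauto)]
          split <;> norm_num
        · rw [if_neg (by tauto)]
          have : ¬ (x ∈ i.1 → y ∈ i.1) := by tauto
          rw [if_neg this]; split <;> norm_num
  · apply TopologicalSpace.ext
    ext U
    constructor
    · intro hU
      rw [isOpen_iff_mem_nhds]
      intro x hx
      obtain ⟨J, hJ⟩ := hU x hx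
      have : (⋂ i ∈ J.filter (fun i : {U : Set X // IsOpen U} => x ∈ i.1), i.1) ⊆ U := by
        intro y hy
        apply hJ
        intro i hi
        unfold canonD dU
        rw [if_pos]
        intro hxi
        exact Set.mem_iInter₂.mp hy i (Finset.mem_filter.mpr ⟨hi, hxi⟩)
      refine Filter.mem_of_superset ?_ this
      apply Filter.biInter_finset_mem _ |>.mpr
      intro i hi
      exact (i.2).mem_nhds (Finset.mem_filter.mp hi).2
    · intro hU x hx
      refine ⟨{⟨U, hU⟩}, fun y hy => ?_⟩
      have := hy ⟨U, hU⟩ (Finset.mem_singleton_self _)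
      unfold canonD dU at this
      by_contra h
      rw [if_neg (by tauto)] at this
      norm_num at this
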